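/- arXiv:2508.11066 — 6 statements merged into one kernel-verified Lean document; each statement's English description precedes it below -/
import Mathlib

section
/- If X₊(p) = A·p and X₋(p) = B·p are linear vector fields on ℝ³ with A = (a_{ij}), B = (b_{ij}), h(x,y,z) = (x²+y²+z²+3)² − 16(x²+y²), and ⟨A·p, ∇h(p)⟩ = −⟨B·p, ∇h(p)⟩ for all p with h(p)=0, then b₁₁ = −a₁₁, b₂₂ = −a₂₂, b₃₃ = −a₃₃, b₁₃ = −a₁₃, b₂₃ = −a₂₃, b₁₂ = −a₁₂ − a₂₁ − b₂₁, b₃₁ = −a₃₁, and b₃₂ = −a₃₂. -/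
/-!
The Lie derivative `lieD` is linear in the matrix, so inelasticity says exactly that the linear
field `(A + B) p` is tangent to the torus. Evaluating this tangency at a few rational points of
the torus forces `A + B` to be an infinitesimal rotation about the `z`-axis: all entries vanish
except the skew pair `(1,2)`, `(2,1)`.
-/

/-- The standard torus function: its zero set is the torus of major radius 2, minor radius 1. -/
noncomputable def torusFn (x y z : ℝ) : ℝ := (x^2 + y^2 + z^2 + 3)^2 - 16*(x^2 + y^2)

/-- Lie derivative of `torusFn` along the linear vector field given by the matrix
entries `a i j`, i.e. `⟨A·p, ∇h(p)⟩`. -/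
noncomputable def lieD (a11 a12 a13 a21 a22 a23 a31 a32 a33 x y z : ℝ) : ℝ :=
  (a11*x + a12*y + a13*z) * (4*x*(x^2 + y^2 + z^2 + 3) - 32*x)
  + (a21*x + a22*y + a23*z) * (4*y*(x^2 + y^2 + z^2 + 3) - 32*y)
  + (a31*x + a32*y + a33*z) * (4*z*(x^2 + y^2 + z^2 + 3))

theorem lieD_add_lieD (a11 a12 a13 a21 a22 a23 a31 a32 a33 : ℝ)
    (b11 b12 b13 b21 b22 b23 b31 b32 b33 x y z : ℝ) :
    lieD a11 a12 a13 a21 a22 a23 a31 a32 a33 x y z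
        + lieD b11 b12 b13 b21 b22 b23 b31 b32 b33 x y z =
      lieD (a11 + b11) (a12 + b12) (a13 + b13) (a21 + b21) (a22 + b22) (a23 + b23)
        (a31 + b31) (a32 + b32) (a33 + b33) x y z := by
  unfold lieD
  ring

/- The points used lie on the tube circles `(ρ - 2)² + z² = 1` over `x² + y² = ρ²`; the rational
ones come from the 3-4-5 triangle: `ρ = 13/5, z = ±4/5`, and `(39/25, 52/25)` is `(13/5, 0)`
rotated by the angle with cosine `3/5`. -/
theorem lieD_coeffs_of_tangent_torus {c11 c12 c13 c21 c22 c23 c31 c32 c33 : ℝ}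
    (h : ∀ x y z : ℝ, torusFn x y z = 0 →
      lieD c11 c12 c13 c21 c22 c23 c31 c32 c33 x y z = 0) :
    c11 = 0 ∧ c22 = 0 ∧ c33 = 0 ∧ c13 = 0 ∧ c23 = 0 ∧ c12 + c21 = 0 ∧ c31 = 0 ∧ c32 = 0 := by
  have e300 := h 3 0 0 (by norm_num [torusFn])
  have e030 := h 0 3 0 (by norm_num [torusFn])
  have e201 := h 2 0 1 (by norm_num [torusFn])
  have e20m := h 2 0 (-1) (by norm_num [torusFn])
  have e021 := h 0 2 1 (by norm_num [torusFn])
  have e02m := h 0 2 (-1) (by norm_num [torusFn])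
  have eXZ := h (13/5) 0 (4/5) (by norm_num [torusFn])
  have eYZ := h 0 (13/5) (4/5) (by norm_num [torusFn])
  have eXYZ := h (39/25) (52/25) (4/5) (by norm_num [torusFn])
  norm_num [lieD] at e300 e030 e201 e20m e021 e02m eXZ eYZ eXYZ
  refine ⟨?_, ?_, ?_, ?_, ?_, ?_, ?_, ?_⟩ <;> linarith

theorem inelastic_matrix_constraints
    (a11 a12 a13 a21 a22 a23 a31 a32 a33 : ℝ)
    (b11 b12 b13 b21 b22 b23 b31 b32 b33 : ℝ)
    (hin : ∀ x y z : ℝ, torusFn x y z = 0 →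
      lieD a11 a12 a13 a21 a22 a23 a31 a32 a33 x y z =
        - lieD b11 b12 b13 b21 b22 b23 b31 b32 b33 x y z) :
    b11 = -a11 ∧ b22 = -a22 ∧ b33 = -a33 ∧ b13 = -a13 ∧ b23 = -a23 ∧
    b12 = -a12 - a21 - b21 ∧ b31 = -a31 ∧ b32 = -a32 := by
  have tangent : ∀ x y z : ℝ, torusFn x y z = 0 →
      lieD (a11 + b11) (a12 + b12) (a13 + b13) (a21 + b21) (a22 + b22) (a23 + b23)
        (a31 + b31) (a32 + b32) (a33 + b33) x y z = 0 := fun x y z hp => by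
    rw [← lieD_add_lieD, hin x y z hp, neg_add_cancel]
  obtain ⟨h11, h22, h33, h13, h23, h12, h31, h32⟩ := lieD_coeffs_of_tangent_torus tangent
  refine ⟨?_, ?_, ?_, ?_, ?_, ?_, ?_, ?_⟩ <;> linarith
end

section
/- Let X₊(p) = A·p and X₋(p) = B·p be linear vector fields on ℝ³ satisfying the inelastic condition over the torus h⁻¹(0), where h(x,y,z) = (x²+y²+z²+3)² − 16(x²+y²). Then the Filippov sliding vector field on the torus equals Z^s(x,y,z) = ½(X₊ + X₋)(x,y,z) = (−½(a₂₁+b₂₁)y, ½(a₂₁+b₂₁)x, 0). -/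
/-!
The matrix constraints say exactly that `A + B` is an infinitesimal rotation about the `z`-axis.
Since the torus function is rotationally symmetric, `X₊h + X₋h` vanishes identically, so the
inelastic condition `X₊h = -X₋h` holds everywhere. With `X₊h = -X₋h` the Filippov convex
combination has equal weights, giving `½(X₊ + X₋) = ½(A + B)p`, a rotation field.
-/

theorem lieD_add (a11 a12 a13 a21 a22 a23 a31 a32 a33 : ℝ)
    (b11 b12 b13 b21 b22 b23 b31 b32 b33 : ℝ) (x y z : ℝ) :
    lieD a11 a12 a13 a21 a22 a23 a31 a32 a33 x y z
        + lieD b11 b12 b13 b21 b22 b23 b31 b32 b33 x y z =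
      lieD (a11 + b11) (a12 + b12) (a13 + b13) (a21 + b21) (a22 + b22) (a23 + b23)
        (a31 + b31) (a32 + b32) (a33 + b33) x y z := by
  unfold lieD
  ring

theorem lieD_rotation_eq_zero (c x y z : ℝ) : lieD 0 (-c) 0 c 0 0 0 0 0 x y z = 0 := by
  unfold lieD
  ring

theorem lieD_eq_neg_of_add_rotation (a11 a12 a13 a21 a22 a23 a31 a32 a33 : ℝ)
    (b11 b12 b13 b21 b22 b23 b31 b32 b33 : ℝ)
    (hb11 : b11 = -a11) (hb22 : b22 = -a22) (hb33 : b33 = -a33)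
    (hb13 : b13 = -a13) (hb23 : b23 = -a23)
    (hb12 : b12 = -a12 - a21 - b21) (hb31 : b31 = -a31) (hb32 : b32 = -a32) (x y z : ℝ) :
    lieD a11 a12 a13 a21 a22 a23 a31 a32 a33 x y z =
      -lieD b11 b12 b13 b21 b22 b23 b31 b32 b33 x y z := by
  rw [eq_neg_iff_add_eq_zero, lieD_add, ← lieD_rotation_eq_zero (a21 + b21) x y z]
  subst hb11 hb22 hb33 hb13 hb23 hb12 hb31 hb32
  congr 1 <;> ring

theorem inv_sub_smul_sub_smul_of_eq_neg {K V : Type*} [Field K] [AddCommGroup V] [Module K V]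
    {α β : K} (hαβ : α = -β) (hden : β - α ≠ 0) (p q : V) :
    (β - α)⁻¹ • (β • p - α • q) = ((1 : K) / 2) • (p + q) := by
  subst hαβ
  have hβ2 : 2 * β ≠ 0 := by rwa [two_mul, ← sub_neg_eq_add]
  rw [sub_neg_eq_add, ← two_mul, neg_smul, sub_neg_eq_add, ← smul_add, smul_smul, mul_inv,
    mul_assoc, inv_mul_cancel₀ (right_ne_zero_of_mul hβ2), mul_one, one_div]

theorem sliding_vector_field_formula_general
    (a11 a12 a13 a21 a22 a23 a31 a32 a33 : ℝ)
    (b11 b12 b13 b21 b22 b23 b31 b32 b33 : ℝ)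
    (hb11 : b11 = -a11) (hb22 : b22 = -a22) (hb33 : b33 = -a33)
    (hb13 : b13 = -a13) (hb23 : b23 = -a23)
    (hb12 : b12 = -a12 - a21 - b21) (hb31 : b31 = -a31) (hb32 : b32 = -a32)
    (x y z : ℝ)
    (hden : lieD b11 b12 b13 b21 b22 b23 b31 b32 b33 x y z
          - lieD a11 a12 a13 a21 a22 a23 a31 a32 a33 x y z ≠ 0) :
    -- the three components of the Filippov sliding vector field
    -- Zˢ = (X₋h · X₊ − X₊h · X₋) / (X₋h − X₊h)
    (let Xph := lieD a11 a12 a13 a21 a22 a23 a31 a32 a33 x y z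
     let Xmh := lieD b11 b12 b13 b21 b22 b23 b31 b32 b33 x y z
     let Xp : ℝ × ℝ × ℝ := (a11*x + a12*y + a13*z, a21*x + a22*y + a23*z,
                            a31*x + a32*y + a33*z)
     let Xm : ℝ × ℝ × ℝ := (b11*x + b12*y + b13*z, b21*x + b22*y + b23*z,
                            b31*x + b32*y + b33*z)
     (Xmh - Xph)⁻¹ • (Xmh • Xp - Xph • Xm) =
        ((1:ℝ)/2) • (Xp + Xm) ∧
     (Xmh - Xph)⁻¹ • (Xmh • Xp - Xph • Xm) =
        (-(1/2)*(a21 + b21)*y, (1/2)*(a21 + b21)*x, 0)) := by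
  intro Xph Xmh Xp Xm
  have hinelastic : Xph = -Xmh :=
    lieD_eq_neg_of_add_rotation _ _ _ _ _ _ _ _ _ _ _ _ _ _ _ _ _ _
      hb11 hb22 hb33 hb13 hb23 hb12 hb31 hb32 x y z
  have hsliding := inv_sub_smul_sub_smul_of_eq_neg hinelastic hden Xp Xm
  refine ⟨hsliding, hsliding.trans ?_⟩
  subst hb11 hb22 hb33 hb13 hb23 hb12 hb31 hb32
  simp only [Xp, Xm, Prod.mk_add_mk, Prod.smul_mk, smul_eq_mul, Prod.mk.injEq]
  refine ⟨by ring, by ring, by ring⟩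

theorem sliding_vector_field_formula
    (a11 a12 a13 a21 a22 a23 a31 a32 a33 : ℝ)
    (b11 b12 b13 b21 b22 b23 b31 b32 b33 : ℝ)
    (hb11 : b11 = -a11) (hb22 : b22 = -a22) (hb33 : b33 = -a33)
    (hb13 : b13 = -a13) (hb23 : b23 = -a23)
    (hb12 : b12 = -a12 - a21 - b21) (hb31 : b31 = -a31) (hb32 : b32 = -a32)
    (hin : ∀ x y z : ℝ, torusFn x y z = 0 →
      lieD a11 a12 a13 a21 a22 a23 a31 a32 a33 x y z =
        - lieD b11 b12 b13 b21 b22 b23 b31 b32 b33 x y z)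
    (x y z : ℝ) (hT : torusFn x y z = 0)
    (hden : lieD b11 b12 b13 b21 b22 b23 b31 b32 b33 x y z
          - lieD a11 a12 a13 a21 a22 a23 a31 a32 a33 x y z ≠ 0) :
    -- the three components of the Filippov sliding vector field
    -- Zˢ = (X₋h · X₊ − X₊h · X₋) / (X₋h − X₊h)
    (let Xph := lieD a11 a12 a13 a21 a22 a23 a31 a32 a33 x y z
     let Xmh := lieD b11 b12 b13 b21 b22 b23 b31 b32 b33 x y z
     let Xp : ℝ × ℝ × ℝ := (a11*x + a12*y + a13*z, a21*x + a22*y + a23*z,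
                            a31*x + a32*y + a33*z)
     let Xm : ℝ × ℝ × ℝ := (b11*x + b12*y + b13*z, b21*x + b22*y + b23*z,
                            b31*x + b32*y + b33*z)
     (Xmh - Xph)⁻¹ • (Xmh • Xp - Xph • Xm) =
        ((1:ℝ)/2) • (Xp + Xm) ∧
     (Xmh - Xph)⁻¹ • (Xmh • Xp - Xph • Xm) =
        (-(1/2)*(a21 + b21)*y, (1/2)*(a21 + b21)*x, 0)) :=
  sliding_vector_field_formula_general a11 a12 a13 a21 a22 a23 a31 a32 a33 b11 b12 b13 b21 b22 b23
    b31 b32 b33 hb11 hb22 hb33 hb13 hb23 hb12 hb31 hb32 x y z hden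
end

section
/- Let A be a 3×3 matrix that is skew-symmetric (so q₄ ≡ 0) and with (a₃₁, a₃₂) ≠ (0,0). Then the tangency set {p ∈ h⁻¹(0) : ⟨A·p, ∇h(p)⟩ = 0} is the union of four disjoint ellipses: the two circles obtained intersecting the torus with z = 0, and the two ellipses obtained intersecting the torus with the plane a₃₁x + a₃₂y = 0. -/
theorem lieD_of_skew (a21 a31 a32 x y z : ℝ) :
    lieD 0 (-a21) (-a31) a21 0 (-a32) a31 a32 0 x y z = 32 * z * (a31 * x + a32 * y) := by
  unfold lieD
  ring

theorem torusFn_z_zero_eq_zero_iff (x y : ℝ) :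
    torusFn x y 0 = 0 ↔ x ^ 2 + y ^ 2 = 1 ∨ x ^ 2 + y ^ 2 = 9 := by
  have hfactor : torusFn x y 0 = (x ^ 2 + y ^ 2 - 1) * (x ^ 2 + y ^ 2 - 9) := by
    unfold torusFn
    ring
  rw [hfactor, mul_eq_zero, sub_eq_zero, sub_eq_zero]

theorem tangency_skew_four_ellipses_general
    (a12 a13 a21 a23 a31 a32 : ℝ)
    (h12 : a12 = -a21) (h13 : a13 = -a31) (h23 : a23 = -a32) :
    {p : ℝ × ℝ × ℝ | torusFn p.1 p.2.1 p.2.2 = 0 ∧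
        lieD 0 a12 a13 a21 0 a23 a31 a32 0 p.1 p.2.1 p.2.2 = 0} =
      ({p : ℝ × ℝ × ℝ | (p.1^2 + p.2.1^2 = 1 ∧ p.2.2 = 0)} ∪
       {p : ℝ × ℝ × ℝ | (p.1^2 + p.2.1^2 = 9 ∧ p.2.2 = 0)}) ∪
      ({p : ℝ × ℝ × ℝ | torusFn p.1 p.2.1 p.2.2 = 0 ∧
          a31*p.1 + a32*p.2.1 = 0}) := by
  subst h12 h13 h23
  ext ⟨x, y, z⟩
  simp only [Set.mem_ofPred_eq, Set.mem_union, lieD_of_skew, mul_eq_zero, OfNat.ofNat_ne_zero,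
    false_or]
  constructor
  · rintro ⟨ht, rfl | hplane⟩
    · rcases (torusFn_z_zero_eq_zero_iff x y).mp ht with h1 | h9
      exacts [Or.inl (Or.inl ⟨h1, rfl⟩), Or.inl (Or.inr ⟨h9, rfl⟩)]
    · exact Or.inr ⟨ht, hplane⟩
  · rintro ((⟨h1, rfl⟩ | ⟨h9, rfl⟩) | ⟨ht, hplane⟩)
    · exact ⟨(torusFn_z_zero_eq_zero_iff x y).mpr (Or.inl h1), Or.inl rfl⟩
    · exact ⟨(torusFn_z_zero_eq_zero_iff x y).mpr (Or.inr h9), Or.inl rfl⟩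
    · exact ⟨ht, Or.inr hplane⟩

theorem tangency_skew_four_ellipses
    (a12 a13 a21 a23 a31 a32 : ℝ)
    (h12 : a12 = -a21) (h13 : a13 = -a31) (h23 : a23 = -a32)
    (hne : (a31, a32) ≠ (0, 0)) :
    {p : ℝ × ℝ × ℝ | torusFn p.1 p.2.1 p.2.2 = 0 ∧
        lieD 0 a12 a13 a21 0 a23 a31 a32 0 p.1 p.2.1 p.2.2 = 0} =
      ({p : ℝ × ℝ × ℝ | (p.1^2 + p.2.1^2 = 1 ∧ p.2.2 = 0)} ∪
       {p : ℝ × ℝ × ℝ | (p.1^2 + p.2.1^2 = 9 ∧ p.2.2 = 0)}) ∪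
      ({p : ℝ × ℝ × ℝ | torusFn p.1 p.2.1 p.2.2 = 0 ∧
          a31*p.1 + a32*p.2.1 = 0}) :=
  tangency_skew_four_ellipses_general a12 a13 a21 a23 a31 a32 h12 h13 h23
end

section
/- Let A be a 3×3 matrix with all entries zero except a₁₂ = −a₂₁ and a₁₃, a₂₃ arbitrary (and a₃₁ = a₃₂ = a₃₃ = 0). Then X₊h(x,y,z) = 4(x²+y²+z²−5)(a₁₃xz + a₂₃yz), and hence the tangency set on the torus T² = h⁻¹(0) is the intersection of T² with the union of the sphere x²+y²+z² = 5, the plane z = 0, and the plane a₁₃x + a₂₃y = 0. -/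
theorem lieD_skew_shear (a12 a13 a21 a23 x y z : ℝ) (h12 : a12 = -a21) :
    lieD 0 a12 a13 a21 0 a23 0 0 0 x y z =
      4*(x^2 + y^2 + z^2 - 5)*(a13*x*z + a23*y*z) := by
  subst h12
  unfold lieD
  ring

theorem sphere_mul_planes_eq_zero_iff (s a b x y z : ℝ) :
    4*(s - 5)*(a*x*z + b*y*z) = 0 ↔ s = 5 ∨ z = 0 ∨ a*x + b*y = 0 := by
  rw [show a*x*z + b*y*z = (a*x + b*y)*z by ring]
  simp only [mul_eq_zero, sub_eq_zero, four_ne_zero, false_or]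
  tauto

theorem tangency_lemma47
    (a12 a13 a21 a23 : ℝ) (h12 : a12 = -a21) :
    (∀ x y z : ℝ,
      lieD 0 a12 a13 a21 0 a23 0 0 0 x y z =
        4*(x^2 + y^2 + z^2 - 5)*(a13*x*z + a23*y*z)) ∧
    {p : ℝ × ℝ × ℝ | torusFn p.1 p.2.1 p.2.2 = 0 ∧
        lieD 0 a12 a13 a21 0 a23 0 0 0 p.1 p.2.1 p.2.2 = 0} =
      {p : ℝ × ℝ × ℝ | torusFn p.1 p.2.1 p.2.2 = 0 ∧
        (p.1^2 + p.2.1^2 + p.2.2^2 = 5 ∨ p.2.2 = 0 ∨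
          a13*p.1 + a23*p.2.1 = 0)} := by
  have hX := fun x y z => lieD_skew_shear a12 a13 a21 a23 x y z h12
  refine ⟨hX, ?_⟩
  ext ⟨x, y, z⟩
  simp only [Set.mem_ofPred_eq, hX, sphere_mul_planes_eq_zero_iff]
end

section
/- Let A be the 3×3 matrix with a₃₃ ≠ 0 and all other entries satisfying a₁₁=a₂₂=0, a₁₂=−a₂₁, a₁₃=a₂₃=a₃₁=a₃₂=0. Then X₊h(x,y,z) = 4a₃₃z²(x²+y²+z²+3), and the tangency set on the torus T² = h⁻¹(0) is exactly T² ∩ {z = 0}, i.e., the union of the two circles x²+y²=1 and x²+y²=9 in the plane z=0. -/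
theorem lieD_rotation_add_vertical (a21 a33 x y z : ℝ) :
    lieD 0 (-a21) 0 a21 0 0 0 0 a33 x y z = 4*a33*z^2*(x^2 + y^2 + z^2 + 3) := by
  unfold lieD
  ring

theorem lieD_rotation_add_vertical_eq_zero_iff {a21 a33 : ℝ} (ha33 : a33 ≠ 0) (x y z : ℝ) :
    lieD 0 (-a21) 0 a21 0 0 0 0 a33 x y z = 0 ↔ z = 0 := by
  have hpos : 0 < x^2 + y^2 + z^2 + 3 := by positivity
  simp [lieD_rotation_add_vertical, ha33, hpos.ne']

theorem torusFn_zero_plane (x y : ℝ) :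
    torusFn x y 0 = (x^2 + y^2 - 1) * (x^2 + y^2 - 9) := by
  unfold torusFn
  ring

theorem torusFn_zero_plane_eq_zero_iff (x y : ℝ) :
    torusFn x y 0 = 0 ↔ x^2 + y^2 = 1 ∨ x^2 + y^2 = 9 := by
  simp only [torusFn_zero_plane, mul_eq_zero, sub_eq_zero]

theorem tangency_lemma48
    (a12 a21 a33 : ℝ) (h12 : a12 = -a21) (ha33 : a33 ≠ 0) :
    (∀ x y z : ℝ,
      lieD 0 a12 0 a21 0 0 0 0 a33 x y z = 4*a33*z^2*(x^2 + y^2 + z^2 + 3)) ∧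
    (∀ x y z : ℝ, torusFn x y z = 0 →
      (lieD 0 a12 0 a21 0 0 0 0 a33 x y z = 0 ↔ z = 0)) ∧
    (∀ x y z : ℝ,
      (torusFn x y z = 0 ∧ z = 0) ↔
      (z = 0 ∧ (x^2 + y^2 = 1 ∨ x^2 + y^2 = 9))) := by
  subst h12
  refine ⟨lieD_rotation_add_vertical a21 a33,
    fun x y z _ => lieD_rotation_add_vertical_eq_zero_iff ha33 x y z, fun x y z => ?_⟩
  rw [and_comm]
  exact and_congr_right fun hz => hz ▸ torusFn_zero_plane_eq_zero_iff x y
end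

section
/- Let A be a 3×3 matrix with a₃₃=a₁₃=a₂₃=a₃₁=a₃₂=0. Then X₊h(x,y,z) = 4(x²+y²+z²−5)[a₁₁x² + a₂₂y² + (a₁₂+a₂₁)xy], so the tangency set on the torus is the intersection of T² with the union of the sphere x²+y²+z²=5 and the quadric cone a₁₁x² + a₂₂y² + (a₁₂+a₂₁)xy = 0. -/
-- The x- and y-components of ∇h share the factor 4(x²+y²+z²−5), and A has no z-row or z-column.
theorem lieD_planar_eq (a11 a12 a21 a22 x y z : ℝ) :
    lieD a11 a12 0 a21 a22 0 0 0 0 x y z =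
      4*(x^2 + y^2 + z^2 - 5)*(a11*x^2 + a22*y^2 + (a12 + a21)*x*y) := by
  unfold lieD
  ring

theorem tangency_lemma49
    (a11 a12 a21 a22 : ℝ) :
    (∀ x y z : ℝ,
      lieD a11 a12 0 a21 a22 0 0 0 0 x y z =
        4*(x^2 + y^2 + z^2 - 5)*(a11*x^2 + a22*y^2 + (a12 + a21)*x*y)) ∧
    (∀ x y z : ℝ, torusFn x y z = 0 →
      (lieD a11 a12 0 a21 a22 0 0 0 0 x y z = 0 ↔
        (x^2 + y^2 + z^2 = 5 ∨ a11*x^2 + a22*y^2 + (a12 + a21)*x*y = 0))) := by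
  refine ⟨lieD_planar_eq a11 a12 a21 a22, fun x y z _ => ?_⟩
  simp only [lieD_planar_eq, mul_eq_zero, sub_eq_zero, four_ne_zero, false_or]
end
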